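/- For every closed curve γ of length 2, the widths satisfy d₀(γ) + d_{π/3}(γ) + d_{2π/3}(γ) ≤ 2, where for θ ∈ ℝ, d_θ(γ) = sup_{s,t ∈ [0,1]} Im(e^{−iθ}(γ(s) − γ(t))) is the width of the minimum-width slab of orientation θ (bounded by two parallel lines of slope θ) containing the image of γ. -/

import Mathlib

open Set MeasureTheory

/-- A closed curve of length 2: continuous on `[0,1]`, closed, with total variation 2. -/
def IsClosedCurve2 (γ : ℝ → ℂ) : Prop :=
  ContinuousOn γ (Set.Icc 0 1) ∧ γ 0 = γ 1 ∧ eVariationOn γ (Set.Icc 0 1) = 2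

/-- The width of the minimum-width slab of orientation θ containing the image of γ:
`sup_{s,t ∈ [0,1]} Im(e^{−iθ}(γ(s) − γ(t)))`. -/
noncomputable def slabWidth (γ : ℝ → ℂ) (θ : ℝ) : ℝ :=
  sSup ((fun p : ℝ × ℝ =>
    (Complex.exp (-(θ : ℂ) * Complex.I) * (γ p.1 - γ p.2)).im) ''
      (Set.Icc 0 1 ×ˢ Set.Icc 0 1))

/-!
Write `p_θ z = Im (e^{-iθ} z)`, so that `d_θ(γ) = sup (p_θ (γ s) - p_θ (γ t))`. The closed curve
splits into two arcs from `γ s` to `γ t`, along each of which `p_θ` changes by at least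
`|p_θ (γ s) - p_θ (γ t)|`; so twice that quantity is at most the variation of `p_θ ∘ γ`.
Since `p_{π/3} = p_0 + p_{2π/3}`, and the largest of `|a|, |b|, |a + b|` dominates the sum of the
other two, `|p_0 v| + |p_{π/3} v| + |p_{2π/3} v| ≤ 2 ‖v‖`. Summing over a common partition, the
variations of the three projections of `γ` add up to at most twice its length.
-/

namespace eVariationOn

variable {α : Type*} [LinearOrder α] {E : Type*} [PseudoEMetricSpace E]

theorem insert_of_isGreatest (f : α → E) {s : Set α} {x a : α} (hs : IsGreatest s x)
    (hxa : x ≤ a) : eVariationOn f (insert a s) = eVariationOn f s + edist (f x) (f a) := by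
  have hsplit : insert a s = s ∪ {x, a} := by
    ext y
    simp only [mem_insert_iff, mem_union, mem_singleton_iff]
    have := hs.1
    grind
  rw [hsplit, union f hs ⟨by simp, by simp [hxa]⟩, pair]

theorem two_mul_edist_le_of_eq {f : α → E} {s : Set α} {a b x y : α} (hf : f a = f b)
    (ha : a ∈ s) (hb : b ∈ s) (hx : x ∈ s ∩ Icc a b) (hy : y ∈ s ∩ Icc a b) :
    2 * edist (f x) (f y) ≤ eVariationOn f s := by
  wlog hxy : x ≤ y generalizing x y
  · rw [edist_comm]; exact this hy hx (le_of_not_ge hxy)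
  have hsplit : eVariationOn f (s ∩ Icc a x) + eVariationOn f (s ∩ Icc x y) +
      eVariationOn f (s ∩ Icc y b) = eVariationOn f (s ∩ Icc a b) := by
    rw [Icc_add_Icc f hx.2.1 hxy hx.1, Icc_add_Icc f (hx.2.1.trans hxy) hy.2.2 hy.1]
  have hloop : edist (f x) (f y) ≤ edist (f a) (f x) + edist (f y) (f b) := by
    calc edist (f x) (f y) ≤ edist (f x) (f a) + edist (f b) (f y) := by
          rw [hf]; exact edist_triangle _ _ _
      _ = _ := by rw [edist_comm (f x), edist_comm (f b), add_comm]
  calc 2 * edist (f x) (f y) = edist (f x) (f y) + edist (f x) (f y) := two_mul _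
    _ ≤ edist (f a) (f x) + edist (f y) (f b) + edist (f x) (f y) := by gcongr
    _ = edist (f a) (f x) + edist (f x) (f y) + edist (f y) (f b) := by ring
    _ ≤ eVariationOn f (s ∩ Icc a b) := by
        rw [← hsplit]
        gcongr <;> apply edist_le <;> simp_all
    _ ≤ eVariationOn f s := mono f inter_subset_left

theorem sum_comp_le {ι : Type*} [Fintype ι] {F : Type*} [PseudoEMetricSpace F]
    {φ : ι → E → F} {C : ENNReal} (hφ : ∀ z w, ∑ i, edist (φ i z) (φ i w) ≤ C * edist z w)
    (f : α → E) (s : Finset α) :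
    ∑ i, eVariationOn (φ i ∘ f) s ≤ C * eVariationOn f s := by
  classical
  induction s using Finset.induction_on_max with
  | empty => simp
  | insert a s hlt ih =>
    rcases s.eq_empty_or_nonempty with rfl | hne
    · simp [eVariationOn.subsingleton]
    have hmax : IsGreatest (s : Set α) (s.max' hne) :=
      ⟨s.max'_mem hne, fun y hy => s.le_max' y hy⟩
    have hle : s.max' hne ≤ a := (hlt _ (s.max'_mem hne)).le
    simp only [Finset.coe_insert, insert_of_isGreatest _ hmax hle, Finset.sum_add_distrib,
      mul_add]
    exact add_le_add ih (hφ _ _)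

end eVariationOn

theorem abs_add_abs_add_abs_add_le {a b m : ℝ} (ha : |a| ≤ m) (hb : |b| ≤ m)
    (hab : |a + b| ≤ m) : |a| + |b| + |a + b| ≤ 2 * m := by
  rcases abs_cases a with ⟨ea, sa⟩ | ⟨ea, sa⟩ <;>
    rcases abs_cases b with ⟨eb, sb⟩ | ⟨eb, sb⟩ <;>
    rcases abs_cases (a + b) with ⟨e, s⟩ | ⟨e, s⟩ <;>
    simp only [ea, eb, e] at ha hb hab ⊢ <;> linarith

/-- `slabWidth γ θ` is, by definition, the supremum of `slabCoord θ (γ s - γ t)`. -/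
noncomputable def slabCoord (θ : ℝ) (z : ℂ) : ℝ := (Complex.exp (-(θ : ℂ) * Complex.I) * z).im

theorem slabCoord_sub (θ : ℝ) (z w : ℂ) :
    slabCoord θ (z - w) = slabCoord θ z - slabCoord θ w := by
  simp [slabCoord, mul_sub]

theorem slabCoord_eq (θ : ℝ) (z : ℂ) :
    slabCoord θ z = Real.cos θ * z.im - Real.sin θ * z.re := by
  rw [slabCoord, ← Complex.ofReal_neg, Complex.exp_mul_I, ← Complex.ofReal_cos,
    ← Complex.ofReal_sin]
  simp only [Complex.mul_im, Complex.add_re, Complex.add_im, Complex.mul_re, Complex.ofReal_re,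
    Complex.ofReal_im, Complex.I_re, Complex.I_im, Real.cos_neg, Real.sin_neg]
  ring

theorem abs_slabCoord_le (θ : ℝ) (z : ℂ) : |slabCoord θ z| ≤ ‖z‖ := by
  calc |slabCoord θ z| ≤ ‖Complex.exp (-(θ : ℂ) * Complex.I) * z‖ := Complex.abs_im_le_norm _
    _ = ‖z‖ := by
      rw [norm_mul, ← Complex.ofReal_neg, Complex.norm_exp_ofReal_mul_I, one_mul]

theorem slabCoord_pi_div_three (z : ℂ) :
    slabCoord (Real.pi / 3) z = slabCoord 0 z + slabCoord (2 * Real.pi / 3) z := by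
  have h : 2 * Real.pi / 3 = Real.pi - Real.pi / 3 := by ring
  simp only [slabCoord_eq, h, Real.cos_pi_sub, Real.sin_pi_sub, Real.cos_pi_div_three,
    Real.sin_pi_div_three, Real.cos_zero, Real.sin_zero]
  ring

noncomputable def hexAngle : Fin 3 → ℝ := ![0, Real.pi / 3, 2 * Real.pi / 3]

theorem sum_abs_slabCoord_hexAngle_le (z : ℂ) :
    ∑ i, |slabCoord (hexAngle i) z| ≤ 2 * ‖z‖ := by
  have h := abs_add_abs_add_abs_add_le (abs_slabCoord_le 0 z)
    (abs_slabCoord_le (2 * Real.pi / 3) z) (slabCoord_pi_div_three z ▸ abs_slabCoord_le _ z)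
  simp only [Fin.sum_univ_three, hexAngle, Matrix.cons_val_zero, Matrix.cons_val_one,
    Matrix.cons_val_two, Matrix.head_cons, Matrix.tail_cons, slabCoord_pi_div_three z]
  linarith

theorem sum_edist_slabCoord_hexAngle_le (z w : ℂ) :
    ∑ i, edist (slabCoord (hexAngle i) z) (slabCoord (hexAngle i) w) ≤ 2 * edist z w := by
  simp only [edist_dist, Real.dist_eq, ← slabCoord_sub]
  rw [← ENNReal.ofReal_sum_of_nonneg fun _ _ => abs_nonneg _, ← ENNReal.ofReal_ofNat 2,
    ← ENNReal.ofReal_mul zero_le_two, Complex.dist_eq]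
  exact ENNReal.ofReal_le_ofReal (sum_abs_slabCoord_hexAngle_le _)

theorem ofReal_sum_abs_slabCoord_hexAngle_le_eVariationOn {γ : ℝ → ℂ} {a b : ℝ}
    (hγ : γ a = γ b) (s t : Fin 3 → ℝ) (hs : ∀ i, s i ∈ Icc a b) (ht : ∀ i, t i ∈ Icc a b) :
    ENNReal.ofReal (∑ i, |slabCoord (hexAngle i) (γ (s i) - γ (t i))|) ≤
      eVariationOn γ (Icc a b) := by
  classical
  set p : Fin 3 → ℂ → ℝ := fun i => slabCoord (hexAngle i)
  set S : Finset ℝ := insert a (insert b (Finset.univ.image s ∪ Finset.univ.image t))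
  have hab : a ≤ b := (hs 0).1.trans (hs 0).2
  have hS : (S : Set ℝ) ⊆ Icc a b := by
    intro x hx
    simp only [S, Finset.coe_insert, Finset.coe_union, Finset.coe_image, Finset.coe_univ,
      image_univ, mem_insert_iff, mem_union, mem_range] at hx
    rcases hx with rfl | rfl | ⟨i, rfl⟩ | ⟨i, rfl⟩
    exacts [left_mem_Icc.2 hab, right_mem_Icc.2 hab, hs i, ht i]
  have hloop : ∀ i, 2 * edist (p i (γ (s i))) (p i (γ (t i))) ≤ eVariationOn (p i ∘ γ) S :=
    fun i => eVariationOn.two_mul_edist_le_of_eq (congrArg (p i) hγ) (by simp [S])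
      (by simp [S]) ⟨by simp [S], hs i⟩ ⟨by simp [S], ht i⟩
  have hsum : ENNReal.ofReal (∑ i, |slabCoord (hexAngle i) (γ (s i) - γ (t i))|) =
      ∑ i, edist (p i (γ (s i))) (p i (γ (t i))) := by
    simp only [p, edist_dist, Real.dist_eq, slabCoord_sub]
    exact ENNReal.ofReal_sum_of_nonneg fun _ _ => abs_nonneg _
  rw [hsum, ← ENNReal.mul_le_mul_iff_right two_ne_zero ENNReal.ofNat_ne_top, Finset.mul_sum]
  calc ∑ i, 2 * edist (p i (γ (s i))) (p i (γ (t i)))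
      ≤ ∑ i, eVariationOn (p i ∘ γ) S := Finset.sum_le_sum fun i _ => hloop i
    _ ≤ 2 * eVariationOn γ S := eVariationOn.sum_comp_le sum_edist_slabCoord_hexAngle_le γ S
    _ ≤ 2 * eVariationOn γ (Icc a b) := by gcongr; exact eVariationOn.mono γ hS

theorem csSup_add_csSup_add_csSup_le {A B C : Set ℝ} (hA : A.Nonempty) (hB : B.Nonempty)
    (hC : C.Nonempty) {c : ℝ} (h : ∀ a ∈ A, ∀ b ∈ B, ∀ d ∈ C, a + b + d ≤ c) :
    sSup A + sSup B + sSup C ≤ c := by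
  have hC' : ∀ a ∈ A, ∀ b ∈ B, sSup C ≤ c - a - b := fun a ha b hb =>
    csSup_le hC fun d hd => by linarith [h a ha b hb d hd]
  have hB' : ∀ a ∈ A, sSup B ≤ c - a - sSup C := fun a ha =>
    csSup_le hB fun b hb => by linarith [hC' a ha b hb]
  have hA' : sSup A ≤ c - sSup B - sSup C := csSup_le hA fun a ha => by linarith [hB' a ha]
  linarith

theorem width_sum_le_two (γ : ℝ → ℂ) (hγ : IsClosedCurve2 γ) :
    slabWidth γ 0 + slabWidth γ (Real.pi / 3) + slabWidth γ (2 * Real.pi / 3) ≤ 2 := by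
  obtain ⟨-, hclosed, hlength⟩ := hγ
  have hne : ∀ θ : ℝ, ((fun p : ℝ × ℝ => slabCoord θ (γ p.1 - γ p.2)) ''
      (Icc 0 1 ×ˢ Icc 0 1)).Nonempty := fun θ =>
    ((nonempty_Icc.2 zero_le_one).prod (nonempty_Icc.2 zero_le_one)).image _
  refine csSup_add_csSup_add_csSup_le (hne _) (hne _) (hne _) ?_
  rintro _ ⟨⟨s₁, t₁⟩, ⟨hs₁, ht₁⟩, rfl⟩ _ ⟨⟨s₂, t₂⟩, ⟨hs₂, ht₂⟩, rfl⟩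
    _ ⟨⟨s₃, t₃⟩, ⟨hs₃, ht₃⟩, rfl⟩
  have h := ofReal_sum_abs_slabCoord_hexAngle_le_eVariationOn hclosed ![s₁, s₂, s₃]
    ![t₁, t₂, t₃] (by intro i; fin_cases i <;> assumption)
    (by intro i; fin_cases i <;> assumption)
  rw [hlength, ← ENNReal.ofReal_ofNat 2, ENNReal.ofReal_le_ofReal_iff zero_le_two] at h
  simp only [Fin.sum_univ_three, hexAngle, Matrix.cons_val_zero, Matrix.cons_val_one,
    Matrix.cons_val_two, Matrix.head_cons, Matrix.tail_cons] at h
  linarith [le_abs_self (slabCoord 0 (γ s₁ - γ t₁)),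
    le_abs_self (slabCoord (Real.pi / 3) (γ s₂ - γ t₂)),
    le_abs_self (slabCoord (2 * Real.pi / 3) (γ s₃ - γ t₃))]
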